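/- For n ≥ 5, the Connected-compelling chromatic number of the cycle C_n equals n − 1. -/

import Mathlib

open SimpleGraph

/-- A proper coloring of `G` with `k` colors. -/
def ProperColoring {V : Type*} {k : ℕ} (G : SimpleGraph V) (c : V → Fin k) : Prop :=
  ∀ ⦃u v : V⦄, G.Adj u v → c u ≠ c v

/-- `f` selects a rainbow committee of the coloring `c`: one vertex of each color. -/
def IsRainbow {V : Type*} {k : ℕ} (c : V → Fin k) (f : Fin k → V) : Prop :=
  ∀ i : Fin k, c (f i) = i

/-- The coloring `c` compels property `P`: every rainbow committee has property `P`. -/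
def Compels {V : Type*} {k : ℕ} (c : V → Fin k) (P : Set V → Prop) : Prop :=
  ∀ f : Fin k → V, IsRainbow c f → P (Set.range f)

/-- The `P`-compelling chromatic number of `G`: the least number of colors in a proper
coloring, using every color, in which every rainbow committee has property `P`. -/
noncomputable def compellingChromNum {V : Type*} (G : SimpleGraph V) (P : Set V → Prop) : ℕ :=
  sInf {k : ℕ | ∃ c : V → Fin k,
    ProperColoring G c ∧ Function.Surjective c ∧ Compels c P}

/-- Property `Connected`: the set induces a connected subgraph of `G`. -/
def InducesConnected {V : Type*} (G : SimpleGraph V) (S : Set V) : Prop :=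
  (G.induce S).Connected

/-- The Connected-compelling chromatic number. -/
noncomputable def connCompellingChromNum {V : Type*} (G : SimpleGraph V) : ℕ :=
  compellingChromNum G (InducesConnected G)

/-!
Colour the path `0, 1, …, n - 2` by position and give the last vertex colour `1`: this proper
colouring uses `n - 1` colours, and a rainbow committee misses exactly one vertex, so it induces a
path.

Conversely, suppose a compelling colouring uses `k ≤ n - 2` colours. A rainbow committee is a
connected proper subset of the cycle, so after a rotation it is the initial segment
`{0, …, k - 1}`. For a vertex `u` outside it, exchanging the member of colour `c u` for `u` gives
another committee. If `k < n - 2`, the exchange at `u = k + 1` is cut off by `k` and `n - 1`, so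
`k = n - 2`. The exchanges at `u = k` and `u = n - 1` stay connected only if `c k = c 0` and
`c (n - 1) = c (k - 1)`, and then doing both at once leaves `{1, …, k - 2}` (nonempty as `n ≥ 5`)
and `{k, k + 1}` separated by `0` and `k - 1`.

All these disconnections are detected the same way: a connected set of the cycle that misses
`i < j` lies either inside the interval `(i, j)` or entirely outside it.
-/

open Function

theorem inducesConnected_image_iff {V W : Type*} {G : SimpleGraph V} {H : SimpleGraph W}
    (φ : G ≃g H) (S : Set V) : InducesConnected H (φ '' S) ↔ InducesConnected G S :=
  (φ.induce (φ.injective.injOn.bijOn_image (s := S))).connected_iff.symm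

theorem Compels.comp_iso {V W : Type*} {G : SimpleGraph V} {H : SimpleGraph W} {k : ℕ}
    {c : W → Fin k} (hc : Compels c (InducesConnected H)) (φ : G ≃g H) :
    Compels (c ∘ φ) (InducesConnected G) := fun f hf => by
  have h := hc (φ ∘ f) hf
  rwa [Set.range_comp, inducesConnected_image_iff] at h

section Rainbow

variable {V : Type*} {k : ℕ} {c : V → Fin k} {g : Fin k → V}

theorem IsRainbow.injOn_range (hg : IsRainbow c g) : Set.InjOn c (Set.range g) :=
  Injective.injOn_range fun i j h => by rwa [comp_apply, comp_apply, hg i, hg j] at h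

theorem IsRainbow.update (hg : IsRainbow c g) (u : V) :
    IsRainbow c (Function.update g (c u) u) := by
  intro i
  rcases eq_or_ne i (c u) with rfl | hi
  · rw [update_self]
  · rw [update_of_ne hi, hg]

theorem IsRainbow.mem_range_update_iff (hg : IsRainbow c g) {u x : V} :
    x ∈ Set.range (Function.update g (c u) u) ↔ x = u ∨ (x ∈ Set.range g ∧ c x ≠ c u) := by
  constructor
  · rintro ⟨i, rfl⟩
    rcases eq_or_ne i (c u) with rfl | hi
    · exact .inl (update_self ..)
    · rw [update_of_ne hi]
      exact .inr ⟨⟨i, rfl⟩, by rwa [hg]⟩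
  · rintro (rfl | ⟨⟨i, rfl⟩, hi⟩)
    · exact ⟨_, update_self ..⟩
    · rw [hg] at hi
      exact ⟨i, by rw [update_of_ne hi]⟩

end Rainbow

theorem cycleGraph_adj_val {n : ℕ} {u v : Fin n} (h : (cycleGraph n).Adj u v) :
    u.val + 1 = v.val ∨ v.val + 1 = u.val ∨ (u.val = 0 ∧ v.val + 1 = n) ∨
      (v.val = 0 ∧ u.val + 1 = n) := by
  have key (a b : Fin n) (h : (a - b).val = 1) :
      a.val = b.val + 1 ∨ (a.val = 0 ∧ b.val + 1 = n) := by
    rcases le_or_gt b a with hba | hab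
    · rw [Fin.coe_sub_iff_le.mpr hba] at h
      omega
    · rw [Fin.coe_sub_iff_lt.mpr hab] at h
      have := b.isLt
      omega
  rcases cycleGraph_adj'.mp h with h | h
  · have := key u v h
    omega
  · have := key v u h
    omega

def cycleGraphAddRight {n : ℕ} [NeZero n] (a : Fin n) : cycleGraph n ≃g cycleGraph n where
  toEquiv := Equiv.addRight a
  map_rel_iff' := by simp [cycleGraph_adj']

theorem InducesConnected.cycleGraph_mem_Ioo {n : ℕ} {S : Set (Fin n)}
    (hS : InducesConnected (cycleGraph n) S) {i j x y : Fin n} (hi : i ∉ S) (hj : j ∉ S)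
    (hx : x ∈ S) (hy : y ∈ S) (hxij : x ∈ Set.Ioo i j) : y ∈ Set.Ioo i j := by
  have step : ∀ u w : Fin n, (cycleGraph n).Adj u w → w ∈ S → u ∈ Set.Ioo i j →
      w ∈ Set.Ioo i j := by
    intro u w huw hw hu
    have hwi : w.val ≠ i.val := Fin.val_ne_of_ne (ne_of_mem_of_not_mem hw hi)
    have hwj : w.val ≠ j.val := Fin.val_ne_of_ne (ne_of_mem_of_not_mem hw hj)
    have := cycleGraph_adj_val huw
    have := j.isLt
    simp only [Set.mem_Ioo, Fin.lt_def] at hu ⊢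
    omega
  obtain ⟨p⟩ := hS.preconnected ⟨x, hx⟩ ⟨y, hy⟩
  suffices ∀ u v : S, ((cycleGraph n).induce S).Walk u v → u.1 ∈ Set.Ioo i j → v.1 ∈ Set.Ioo i j
    from this _ _ p hxij
  intro u v q
  induction q with
  | nil => exact id
  | cons h _ ih => exact fun hu => ih (step _ _ h (Subtype.prop _) hu)

theorem inducesConnected_cycleGraph_compl_last (m : ℕ) :
    InducesConnected (cycleGraph (m + 2)) {Fin.last (m + 1)}ᶜ := by
  let f : pathGraph (m + 1) →g (cycleGraph (m + 2)).induce {Fin.last (m + 1)}ᶜ :=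
    { toFun := fun i => ⟨i.castSucc, Fin.castSucc_ne_last i⟩
      map_rel' := fun h =>
        induce_adj.mpr <| pathGraph_le_cycleGraph (by simpa [pathGraph_adj] using h) }
  exact (pathGraph_connected m).map f fun ⟨x, hx⟩ =>
    ⟨x.castPred hx, Subtype.ext (Fin.castSucc_castPred x hx)⟩

theorem inducesConnected_cycleGraph_compl_singleton {m : ℕ} (w : Fin (m + 2)) :
    InducesConnected (cycleGraph (m + 2)) {w}ᶜ := by
  let φ := cycleGraphAddRight (w - Fin.last (m + 1))
  have h : φ '' {Fin.last (m + 1)}ᶜ = {w}ᶜ := by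
    rw [Set.image_compl_eq φ.bijective, Set.image_singleton]
    simp [φ, cycleGraphAddRight]
  rw [← h, inducesConnected_image_iff]
  exact inducesConnected_cycleGraph_compl_last m

theorem Fin.exists_notMem_add_one_mem {n : ℕ} [NeZero n] {S : Set (Fin n)} {x w : Fin n}
    (hx : x ∈ S) (hw : w ∉ S) : ∃ v ∉ S, v + 1 ∈ S := by
  obtain _ | n := n
  · exact x.elim0
  by_contra! h
  have : ∀ d : Fin (n + 1), w + d ∉ S :=
    Fin.induction (by simpa) fun d hd => by
      rw [← Fin.coeSucc_eq_succ, ← add_assoc]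
      exact h _ hd
  exact this (x - w) (by simpa)

theorem InducesConnected.cycleGraph_eq_setOf_val_lt_ncard {m : ℕ} {S : Set (Fin (m + 1))}
    (hS : InducesConnected (cycleGraph (m + 1)) S) (h0 : 0 ∈ S) (hlast : Fin.last m ∉ S) :
    S = {x | x.val < S.ncard} := by
  have hlower : IsLowerSet S := by
    intro y z hzy hy
    by_contra hz
    have hyz : z < y := lt_of_le_of_ne hzy (ne_of_mem_of_not_mem hy hz).symm
    have hylast : y < Fin.last m := lt_of_le_of_ne (Fin.le_last y) (ne_of_mem_of_not_mem hy hlast)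
    exact Fin.not_lt_zero z (hS.cycleGraph_mem_Ioo hz hlast hy h0 ⟨hyz, hylast⟩).1
  obtain ⟨a, rfl⟩ := hlower.eq_univ_or_Iio.resolve_left fun h => hlast (h ▸ trivial)
  rw [Set.ncard_eq_toFinset_card', Set.toFinset_Iio, Fin.card_Iio]
  ext x
  exact Fin.lt_def

theorem exists_connCompelling_coloring_cycleGraph {m : ℕ} (hm : 2 ≤ m) :
    ∃ c : Fin (m + 2) → Fin (m + 1), ProperColoring (cycleGraph (m + 2)) c ∧
      Surjective c ∧ Compels c (InducesConnected (cycleGraph (m + 2))) := by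
  refine ⟨Fin.lastCases 1 id, ?_, fun i => ⟨i.castSucc, by simp⟩, ?_⟩
  · intro u v huv
    have := cycleGraph_adj_val huv
    have h1 : (1 : Fin (m + 1)).val = 1 := by rw [Fin.val_one', Nat.mod_eq_of_lt (by omega)]
    induction u using Fin.lastCases <;> induction v using Fin.lastCases <;>
      simp only [Fin.lastCases_last, Fin.lastCases_castSucc, id, ne_eq, Fin.ext_iff,
        Fin.val_last, Fin.val_castSucc] at this ⊢ <;>
      omega
  · intro f hf
    have hcard : (Set.range f).ncard = m + 1 := by
      rw [Set.ncard_range_of_injective (LeftInverse.injective hf), Nat.card_eq_fintype_card,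
        Fintype.card_fin]
    obtain ⟨w, hw⟩ : ∃ w, w ∉ Set.range f := by
      by_contra! h
      rw [Set.eq_univ_of_forall h, Set.ncard_univ, Nat.card_eq_fintype_card,
        Fintype.card_fin] at hcard
      omega
    have : Set.range f = {w}ᶜ :=
      Set.eq_of_subset_of_ncard_le (fun x hx => ne_of_mem_of_not_mem hx hw) (by
        rw [hcard, Set.ncard_compl, Set.ncard_singleton, Nat.card_eq_fintype_card,
          Fintype.card_fin]
        omega) (Set.toFinite _)
    rw [this]
    exact inducesConnected_cycleGraph_compl_singleton w

section InitialSegment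

variable {n k : ℕ} {c : Fin n → Fin k} {g : Fin k → Fin n}

theorem IsRainbow.color_ne_of_val_lt (hg : IsRainbow c g)
    (hrange : ∀ x, x ∈ Set.range g ↔ x.val < k) {x y : Fin n} (hx : x.val < k) (hy : y.val < k)
    (hxy : x ≠ y) : c x ≠ c y :=
  hg.injOn_range.ne ((hrange x).2 hx) ((hrange y).2 hy) hxy

theorem Compels.le_add_two_of_range (hc : Compels c (InducesConnected (cycleGraph n)))
    (hg : IsRainbow c g) (hrange : ∀ x, x ∈ Set.range g ↔ x.val < k) (hk : 2 ≤ k) :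
    n ≤ k + 2 := by
  by_contra! hkn
  obtain ⟨u, hu⟩ : ∃ u : Fin n, u.val = k + 1 := ⟨⟨k + 1, by omega⟩, rfl⟩
  obtain ⟨i, hi⟩ : ∃ i : Fin n, i.val = k := ⟨⟨k, by omega⟩, rfl⟩
  obtain ⟨j, hj⟩ : ∃ j : Fin n, j.val = n - 1 := ⟨⟨n - 1, by omega⟩, rfl⟩
  obtain ⟨x, hxk, hx⟩ : ∃ x : Fin n, x.val < k ∧ c x ≠ c u := by
    by_contra! h
    refine hg.color_ne_of_val_lt hrange (x := ⟨0, by omega⟩) (y := ⟨1, by omega⟩)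
      (by dsimp; omega) (by dsimp; omega) (by simp) ?_
    rw [h ⟨0, _⟩ (by dsimp; omega), h ⟨1, _⟩ (by dsimp; omega)]
  have hmem y : y ∈ Set.range (update g (c u) u) ↔ y = u ∨ (y.val < k ∧ c y ≠ c u) := by
    rw [hg.mem_range_update_iff, hrange]
  refine absurd ((hc _ (hg.update u)).cycleGraph_mem_Ioo (i := i) (j := j) (x := u) (y := x)
    ?_ ?_ ?_ ?_ ?_) ?_
  all_goals simp only [hmem, Set.mem_Ioo, Fin.lt_def, true_or]
  all_goals omega

theorem Compels.color_eq_color_zero_of_range (hc : Compels c (InducesConnected (cycleGraph n)))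
    (hg : IsRainbow c g) (hrange : ∀ x, x ∈ Set.range g ↔ x.val < k) (hkn : k + 2 ≤ n)
    {u x : Fin n} (hu : u.val = k) (hx : x.val = 0) : c u = c x := by
  by_contra hne
  obtain ⟨j, hj⟩ : ∃ j : Fin n, j.val = n - 1 := ⟨⟨n - 1, by omega⟩, rfl⟩
  have hmem y : y ∈ Set.range (update g (c u) u) ↔ y = u ∨ (y.val < k ∧ c y ≠ c u) := by
    rw [hg.mem_range_update_iff, hrange]
  have hp : (g (c u)).val < k := (hrange _).1 ⟨_, rfl⟩
  have hcp : c (g (c u)) = c u := hg _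
  refine absurd ((hc _ (hg.update u)).cycleGraph_mem_Ioo (i := g (c u)) (j := j) (x := u)
    (y := x) ?_ ?_ ?_ ?_ ?_) ?_
  all_goals simp only [hmem, Set.mem_Ioo, Fin.lt_def, true_or]
  all_goals omega

theorem Compels.color_last_eq_color_pred_of_range
    (hc : Compels c (InducesConnected (cycleGraph n))) (hg : IsRainbow c g)
    (hrange : ∀ x, x ∈ Set.range g ↔ x.val < k) (hk : 1 ≤ k) (hkn : k + 2 ≤ n)
    {u x : Fin n} (hu : u.val = n - 1) (hx : x.val = k - 1) : c u = c x := by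
  by_contra hne
  obtain ⟨i, hi⟩ : ∃ i : Fin n, i.val = k := ⟨⟨k, by omega⟩, rfl⟩
  have hmem y : y ∈ Set.range (update g (c u) u) ↔ y = u ∨ (y.val < k ∧ c y ≠ c u) := by
    rw [hg.mem_range_update_iff, hrange]
  have hp : (g (c u)).val < k := (hrange _).1 ⟨_, rfl⟩
  have hcp : c (g (c u)) = c u := hg _
  have hpx : g (c u) ≠ x := fun h => hne (h ▸ hcp).symm
  refine absurd ((hc _ (hg.update u)).cycleGraph_mem_Ioo (i := g (c u)) (j := i) (x := x)
    (y := u) ?_ ?_ ?_ ?_ ?_) ?_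
  all_goals simp only [hmem, Set.mem_Ioo, Fin.lt_def, true_or]
  all_goals omega

theorem Compels.le_add_one_of_range (hc : Compels c (InducesConnected (cycleGraph n)))
    (hg : IsRainbow c g) (hrange : ∀ x, x ∈ Set.range g ↔ x.val < k) (hn : 5 ≤ n) (hk : 2 ≤ k) :
    n ≤ k + 1 := by
  by_contra! hkn
  have hnk : n = k + 2 := le_antisymm (hc.le_add_two_of_range hg hrange hk) hkn
  obtain ⟨u₁, hu₁⟩ : ∃ u : Fin n, u.val = k := ⟨⟨k, by omega⟩, rfl⟩
  obtain ⟨u₂, hu₂⟩ : ∃ u : Fin n, u.val = n - 1 := ⟨⟨n - 1, by omega⟩, rfl⟩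
  obtain ⟨z, hz⟩ : ∃ z : Fin n, z.val = 0 := ⟨⟨0, by omega⟩, rfl⟩
  obtain ⟨o, ho⟩ : ∃ o : Fin n, o.val = 1 := ⟨⟨1, by omega⟩, rfl⟩
  obtain ⟨w, hw⟩ : ∃ w : Fin n, w.val = k - 1 := ⟨⟨k - 1, by omega⟩, rfl⟩
  have h₁ : c u₁ = c z := hc.color_eq_color_zero_of_range hg hrange hkn hu₁ hz
  have h₂ : c u₂ = c w := hc.color_last_eq_color_pred_of_range hg hrange (by omega) hkn hu₂ hw
  have hoz : c o ≠ c z := hg.color_ne_of_val_lt hrange (by omega) (by omega) (by omega)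
  have how : c o ≠ c w := hg.color_ne_of_val_lt hrange (by omega) (by omega) (by omega)
  have hzw : c z ≠ c w := hg.color_ne_of_val_lt hrange (by omega) (by omega) (by omega)
  have hmem y : y ∈ Set.range (update (update g (c u₁) u₁) (c u₂) u₂) ↔
      y = u₂ ∨ ((y = u₁ ∨ (y.val < k ∧ c y ≠ c z)) ∧ c y ≠ c w) := by
    rw [(hg.update u₁).mem_range_update_iff, hg.mem_range_update_iff, hrange, h₁, h₂]
  refine absurd ((hc _ ((hg.update u₁).update u₂)).cycleGraph_mem_Ioo (i := z) (j := w) (x := o)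
    (y := u₁) ?_ ?_ ?_ ?_ ?_) ?_
  all_goals simp only [hmem, Set.mem_Ioo, Fin.lt_def, true_or, true_and]
  all_goals omega

end InitialSegment

theorem sub_one_le_of_connCompelling_cycleGraph {n k : ℕ} (hn : 5 ≤ n) (c : Fin n → Fin k)
    (hp : ProperColoring (cycleGraph n) c) (hs : Surjective c)
    (hc : Compels c (InducesConnected (cycleGraph n))) : n - 1 ≤ k := by
  obtain ⟨m, rfl⟩ : ∃ m, n = m + 1 := ⟨n - 1, by omega⟩
  have hk : 2 ≤ k := by
    have hadj : (cycleGraph (m + 1)).Adj 0 1 := by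
      rw [cycleGraph_adj']
      right
      simp [Nat.mod_eq_of_lt (show 1 < m + 1 by omega)]
    exact Fin.nontrivial_iff_two_le.mp ⟨c 0, c 1, hp hadj⟩
  by_contra! hkm
  choose g hg using hs
  obtain ⟨w, hw⟩ : ∃ w, w ∉ Set.range g := by
    by_contra! h
    have := Set.ncard_range_of_injective (LeftInverse.injective hg)
    rw [Set.eq_univ_of_forall h, Set.ncard_univ, Nat.card_eq_fintype_card, Fintype.card_fin,
      Nat.card_eq_fintype_card, Fintype.card_fin] at this
    omega
  obtain ⟨v, hv, hv1⟩ := Fin.exists_notMem_add_one_mem (Set.mem_range_self ⟨0, by omega⟩) hw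
  let φ := cycleGraphAddRight (v + 1)
  let g' : Fin k → Fin (m + 1) := fun i => g i - (v + 1)
  have hg' : IsRainbow (c ∘ φ) g' := fun i => by simp [φ, g', cycleGraphAddRight, hg i]
  have hcard : (Set.range g').ncard = k := by
    rw [Set.ncard_range_of_injective (LeftInverse.injective hg'),
      Nat.card_eq_fintype_card, Fintype.card_fin]
  have hrange := (hc.comp_iso φ g' hg').cycleGraph_eq_setOf_val_lt_ncard ?_ ?_
  · have := (hc.comp_iso φ).le_add_one_of_range hg' (fun x => by rw [hrange, hcard]; rfl) hn hk
    omega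
  · obtain ⟨i, hi⟩ := hv1
    exact ⟨i, by simp [g', hi]⟩
  · rintro ⟨i, hi⟩
    refine hv ⟨i, ?_⟩
    rw [sub_eq_iff_eq_add] at hi
    rw [hi, ← add_assoc, add_right_comm, Fin.last_add_one, zero_add]

/-- For `n ≥ 5`, the Connected-compelling chromatic number of the cycle `C_n` is `n - 1`. -/
theorem connCompellingChromNum_cycleGraph (n : ℕ) (hn : 5 ≤ n) :
    connCompellingChromNum (cycleGraph n) = n - 1 := by
  obtain ⟨m, rfl⟩ : ∃ m, n = m + 2 := ⟨n - 2, by omega⟩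
  refine IsLeast.csInf_eq ⟨exists_connCompelling_coloring_cycleGraph (by omega), ?_⟩
  rintro k ⟨c, hp, hs, hc⟩
  exact sub_one_le_of_connCompelling_cycleGraph hn c hp hs hc
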